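/- Under the v-continuity domain decomposition method, if in addition each matrix A_i = M_i + (γ − 1/2)·Δt·K_i is positive definite, then the rates and the temperature jumps are bounded: there exists a constant C > 0 such that for all i ∈ {1,…,S} and all n ∈ ℕ, ‖v_i(n)‖ ≤ C and ‖d_i(n+1) − d_i(n)‖ ≤ C. -/

import Mathlib

open Matrix

/-- The Euclidean norm of a vector indexed by `Fin k`. -/
noncomputable def enorm {k : ℕ} (x : Fin k → ℝ) : ℝ := Real.sqrt (x ⬝ᵥ x)

/-!
Shift the displacements to `eᵢ(n) = dᵢ(n) - (γ - 1/2)·Δt·vᵢ(n)`. The subdomain equations become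
`Aᵢ vᵢ(n) + Kᵢ eᵢ(n) = Cᵢᵀ λ(n)` and the trapezoidal rule becomes the midpoint rule
`eᵢ(n+1) - eᵢ(n) = (Δt/2) wᵢ` with `wᵢ = vᵢ(n) + vᵢ(n+1)`. Testing the difference of two
consecutive equations against `wᵢ` and summing over the subdomains, the multiplier term cancels by
v-continuity, so the energy `∑ᵢ vᵢ(n)ᵀ Aᵢ vᵢ(n)` decreases by `(Δt/2) ∑ᵢ wᵢᵀ Kᵢ wᵢ ≥ 0` at each
step. Coercivity of the positive definite `Aᵢ` turns the energy bound into a bound on the rates,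
and the update rule bounds the jumps by the rates.
-/

theorem enorm_eq_norm_toLp {k : ℕ} (x : Fin k → ℝ) : _root_.enorm x = ‖WithLp.toLp 2 x‖ := by
  simp [_root_.enorm, EuclideanSpace.norm_eq, dotProduct, sq]

theorem enorm_smul_add_smul_le {k : ℕ} (a b : ℝ) (x y : Fin k → ℝ) :
    _root_.enorm (a • x + b • y) ≤ |a| * _root_.enorm x + |b| * _root_.enorm y := by
  simp only [enorm_eq_norm_toLp, WithLp.toLp_add, WithLp.toLp_smul, ← Real.norm_eq_abs,
    ← norm_smul]
  exact norm_add_le _ _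

open scoped MatrixOrder in
theorem Matrix.PosDef.exists_pos_mul_dotProduct_self_le {n : Type*} [Fintype n]
    {A : Matrix n n ℝ} (hA : A.PosDef) : ∃ r > 0, ∀ x, r * (x ⬝ᵥ x) ≤ x ⬝ᵥ A *ᵥ x := by
  classical
  cases isEmpty_or_nonempty n
  · exact ⟨1, one_pos, fun x => by simp [dotProduct]⟩
  obtain ⟨r, hr, hrA⟩ : ∃ r > 0, algebraMap ℝ (Matrix n n ℝ) r ≤ A := by
    rw [CFC.exists_pos_algebraMap_le_iff hA.1.isSelfAdjoint]
    exact (StarOrderedRing.isStrictlyPositive_iff_spectrum_pos A).mp hA.isStrictlyPositive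
  refine ⟨r, hr, fun x => ?_⟩
  have := (Matrix.le_iff.mp hrA).dotProduct_mulVec_nonneg x
  rwa [star_trivial, sub_mulVec, dotProduct_sub, Algebra.algebraMap_eq_smul_one, smul_mulVec,
    one_mulVec, dotProduct_smul, smul_eq_mul, sub_nonneg] at this

theorem Matrix.PosDef.exists_enorm_le {k : ℕ} {A : Matrix (Fin k) (Fin k) ℝ} (hA : A.PosDef)
    (c : ℝ) : ∃ R, ∀ x, x ⬝ᵥ A *ᵥ x ≤ c → _root_.enorm x ≤ R := by
  obtain ⟨r, hr, hrA⟩ := hA.exists_pos_mul_dotProduct_self_le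
  refine ⟨Real.sqrt (c / r), fun x hx => Real.sqrt_le_sqrt ?_⟩
  rw [le_div_iff₀ hr, mul_comm]
  exact (hrA x).trans hx

theorem Matrix.IsSymm.dotProduct_mulVec_comm {n α : Type*} [Fintype n] [CommSemiring α]
    {A : Matrix n n α} (hA : A.IsSymm) (x y : n → α) : x ⬝ᵥ A *ᵥ y = y ⬝ᵥ A *ᵥ x := by
  simpa only [hA.eq] using dotProduct_transpose_mulVec A x y

section Subdomain

variable {n m : Type*} [Fintype n] [Fintype m]

theorem dotProduct_mulVec_sub_eq_of_midpoint {A K : Matrix n n ℝ} {C : Matrix m n ℝ}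
    (hA : A.IsSymm) {h : ℝ} {v₀ v₁ e₀ e₁ : n → ℝ} {μ₀ μ₁ : m → ℝ}
    (h₀ : A *ᵥ v₀ + K *ᵥ e₀ = Cᵀ *ᵥ μ₀) (h₁ : A *ᵥ v₁ + K *ᵥ e₁ = Cᵀ *ᵥ μ₁)
    (he : e₁ - e₀ = h • (v₀ + v₁)) :
    v₁ ⬝ᵥ A *ᵥ v₁ - v₀ ⬝ᵥ A *ᵥ v₀ =
      (μ₁ - μ₀) ⬝ᵥ C *ᵥ (v₀ + v₁) - h * ((v₀ + v₁) ⬝ᵥ K *ᵥ (v₀ + v₁)) := by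
  have hdiff : A *ᵥ (v₁ - v₀) + h • K *ᵥ (v₀ + v₁) = Cᵀ *ᵥ (μ₁ - μ₀) := by
    rw [mulVec_sub, mulVec_sub, ← h₀, ← h₁, ← mulVec_smul, ← he, mulVec_sub]
    abel
  have htest := congrArg ((v₀ + v₁) ⬝ᵥ ·) hdiff
  simp only [dotProduct_add, dotProduct_smul, smul_eq_mul, dotProduct_transpose_mulVec] at htest
  rw [← htest, mulVec_sub, dotProduct_sub, add_dotProduct, add_dotProduct,
    hA.dotProduct_mulVec_comm v₀ v₁]
  ring

theorem dotProduct_mulVec_sub_eq_of_trapezoid {M K : Matrix n n ℝ} {C : Matrix m n ℝ} {Δt γ : ℝ}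
    (hA : (M + ((γ - 1/2) * Δt) • K).IsSymm) {d₀ d₁ v₀ v₁ : n → ℝ} {μ₀ μ₁ : m → ℝ}
    (h₀ : M *ᵥ v₀ + K *ᵥ d₀ = Cᵀ *ᵥ μ₀) (h₁ : M *ᵥ v₁ + K *ᵥ d₁ = Cᵀ *ᵥ μ₁)
    (hupd : d₁ = d₀ + Δt • ((1 - γ) • v₀ + γ • v₁)) :
    v₁ ⬝ᵥ (M + ((γ - 1/2) * Δt) • K) *ᵥ v₁ - v₀ ⬝ᵥ (M + ((γ - 1/2) * Δt) • K) *ᵥ v₀ =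
      (μ₁ - μ₀) ⬝ᵥ C *ᵥ (v₀ + v₁) - Δt / 2 * ((v₀ + v₁) ⬝ᵥ K *ᵥ (v₀ + v₁)) := by
  have hshift : ∀ v d : n → ℝ, M *ᵥ v + K *ᵥ d =
      (M + ((γ - 1/2) * Δt) • K) *ᵥ v + K *ᵥ (d - ((γ - 1/2) * Δt) • v) := by
    intro v d
    rw [add_mulVec, smul_mulVec, mulVec_sub, mulVec_smul]
    abel
  refine dotProduct_mulVec_sub_eq_of_midpoint hA (hshift v₀ d₀ ▸ h₀) (hshift v₁ d₁ ▸ h₁) ?_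
  rw [hupd]
  module

end Subdomain

section Energy

variable {ι m : Type*} [Fintype ι] [Fintype m] {κ : ι → Type*} [∀ i, Fintype (κ i)]

def energy (A : ∀ i, Matrix (κ i) (κ i) ℝ) (v : ∀ i, κ i → ℝ) : ℝ :=
  ∑ i, v i ⬝ᵥ A i *ᵥ v i

theorem dotProduct_mulVec_le_energy {A : ∀ i, Matrix (κ i) (κ i) ℝ} (hA : ∀ i, (A i).PosSemidef)
    (v : ∀ i, κ i → ℝ) (i : ι) : v i ⬝ᵥ A i *ᵥ v i ≤ energy A v :=
  Finset.single_le_sum (f := fun j => v j ⬝ᵥ A j *ᵥ v j)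
    (fun j _ => by simpa only [star_trivial] using (hA j).dotProduct_mulVec_nonneg (v j))
    (Finset.mem_univ i)

theorem energy_antitone_of_trapezoid {M K : ∀ i, Matrix (κ i) (κ i) ℝ} {C : ∀ i, Matrix m (κ i) ℝ}
    {Δt γ : ℝ} (hΔt : 0 ≤ Δt) (hK : ∀ i, (K i).PosSemidef)
    (hA : ∀ i, (M i + ((γ - 1/2) * Δt) • K i).IsSymm)
    {d v : ∀ i, ℕ → κ i → ℝ} {lam : ℕ → m → ℝ}
    (heq : ∀ i n, M i *ᵥ v i n + K i *ᵥ d i n = (C i)ᵀ *ᵥ lam n)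
    (hupd : ∀ i n, d i (n + 1) = d i n + Δt • ((1 - γ) • v i n + γ • v i (n + 1)))
    (hcont : ∀ n, ∑ i, C i *ᵥ v i n = 0) :
    Antitone fun n => energy (fun i => M i + ((γ - 1/2) * Δt) • K i) fun i => v i n := by
  refine antitone_nat_of_succ_le fun n => sub_nonpos.mp ?_
  have hstep := fun i => dotProduct_mulVec_sub_eq_of_trapezoid (hA i) (heq i n) (heq i (n + 1))
    (hupd i n)
  have hmult : ∑ i, (lam (n + 1) - lam n) ⬝ᵥ C i *ᵥ (v i n + v i (n + 1)) = 0 := by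
    simp only [← dotProduct_sum, mulVec_add, Finset.sum_add_distrib, hcont, add_zero,
      dotProduct_zero]
  have hdiss : 0 ≤ ∑ i, Δt / 2 * ((v i n + v i (n + 1)) ⬝ᵥ K i *ᵥ (v i n + v i (n + 1))) :=
    Finset.sum_nonneg fun i _ => mul_nonneg (by positivity)
      (by simpa only [star_trivial] using (hK i).dotProduct_mulVec_nonneg _)
  rw [energy, energy, ← Finset.sum_sub_distrib, Finset.sum_congr rfl fun i _ => hstep i,
    Finset.sum_sub_distrib, hmult]
  linarith

end Energy

theorem vContinuity_rates_and_jumps_bounded_general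
    (S m : ℕ) (nn : Fin S → ℕ)
    (M K : ∀ i : Fin S, Matrix (Fin (nn i)) (Fin (nn i)) ℝ)
    (hK : ∀ i, (K i).PosSemidef)
    (C : ∀ i : Fin S, Matrix (Fin m) (Fin (nn i)) ℝ)
    (Δt γ : ℝ) (hΔt : 0 < Δt)
    (hA : ∀ i, (M i + ((γ - 1/2) * Δt) • K i).PosDef)
    (d v : ∀ i : Fin S, ℕ → (Fin (nn i) → ℝ)) (lam : ℕ → (Fin m → ℝ))
    (heq : ∀ i n, (M i).mulVec (v i n) + (K i).mulVec (d i n) = (C i)ᵀ.mulVec (lam n))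
    (hupd : ∀ i n, d i (n + 1) = d i n + Δt • ((1 - γ) • v i n + γ • v i (n + 1)))
    (hcont : ∀ n, ∑ i : Fin S, (C i).mulVec (v i n) = 0) :
    ∃ C₀ > (0 : ℝ), ∀ i : Fin S, ∀ n : ℕ,
      _root_.enorm (v i n) ≤ C₀ ∧ _root_.enorm (d i (n + 1) - d i n) ≤ C₀ := by
  set A := fun i => M i + ((γ - 1/2) * Δt) • K i
  have hdecay : Antitone fun n => energy A fun i => v i n :=
    energy_antitone_of_trapezoid hΔt.le hK (fun i => isHermitian_iff_isSymm.mp (hA i).isHermitian)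
      heq hupd hcont
  have hvA : ∀ i n, v i n ⬝ᵥ A i *ᵥ v i n ≤ energy A fun i => v i 0 := fun i n =>
    (dotProduct_mulVec_le_energy (fun j => (hA j).posSemidef) _ i).trans (hdecay (Nat.zero_le n))
  choose R hR using fun i => (hA i).exists_enorm_le (energy A fun i => v i 0)
  obtain ⟨B, hB⟩ := Finite.exists_le R
  set B' := max B 1
  have hv : ∀ i n, _root_.enorm (v i n) ≤ B' := fun i n =>
    ((hR i _ (hvA i n)).trans (hB i)).trans (le_max_left _ _)
  have hB' : 0 < B' := lt_max_of_lt_right one_pos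
  refine ⟨(1 + |Δt * (1 - γ)| + |Δt * γ|) * B', by positivity, fun i n => ⟨?_, ?_⟩⟩
  · nlinarith [hv i n, abs_nonneg (Δt * (1 - γ)), abs_nonneg (Δt * γ)]
  · have hjump : d i (n + 1) - d i n = (Δt * (1 - γ)) • v i n + (Δt * γ) • v i (n + 1) := by
      rw [hupd]
      module
    rw [hjump]
    refine (enorm_smul_add_smul_le _ _ _ _).trans ?_
    nlinarith [hv i n, hv i (n + 1), abs_nonneg (Δt * (1 - γ)), abs_nonneg (Δt * γ)]

/-- Under the v-continuity domain decomposition method, if each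
`Aᵢ = Mᵢ + (γ - 1/2)·Δt·Kᵢ` is positive definite, then the rates `vᵢ(n)` and the
temperature jumps `dᵢ(n+1) - dᵢ(n)` are bounded uniformly in `i` and `n`. -/
theorem vContinuity_rates_and_jumps_bounded
    (S m : ℕ) (hS : 1 ≤ S) (nn : Fin S → ℕ)
    (M K : ∀ i : Fin S, Matrix (Fin (nn i)) (Fin (nn i)) ℝ)
    (hM : ∀ i, (M i).PosDef) (hK : ∀ i, (K i).PosSemidef)
    (C : ∀ i : Fin S, Matrix (Fin m) (Fin (nn i)) ℝ)
    (Δt γ : ℝ) (hΔt : 0 < Δt) (hγ₀ : 0 ≤ γ) (hγ₁ : γ ≤ 1)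
    (hA : ∀ i, (M i + ((γ - 1/2) * Δt) • K i).PosDef)
    (d v : ∀ i : Fin S, ℕ → (Fin (nn i) → ℝ)) (lam : ℕ → (Fin m → ℝ))
    (heq : ∀ i n, (M i).mulVec (v i n) + (K i).mulVec (d i n) = (C i)ᵀ.mulVec (lam n))
    (hupd : ∀ i n, d i (n + 1) = d i n + Δt • ((1 - γ) • v i n + γ • v i (n + 1)))
    (hcont : ∀ n, ∑ i : Fin S, (C i).mulVec (v i n) = 0) :
    ∃ C₀ > (0 : ℝ), ∀ i : Fin S, ∀ n : ℕ,
      _root_.enorm (v i n) ≤ C₀ ∧ _root_.enorm (d i (n + 1) - d i n) ≤ C₀ :=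
  vContinuity_rates_and_jumps_bounded_general S m nn M K hK C Δt γ hΔt hA d v lam heq hupd hcont
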